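/- Let α: ℝ³ → M₄(ℝ) be as for the Heisenberg projective structure (rows (0,x₁,0,0), (x₁,0,0,0), (x₂,−x₂,−x₁,0), (x₃,x₃,−x₁,x₁)) and define the dual action Φ*(x)v = −α(x)ᵀv on ℝ⁴ and dual curvature κ*(x,y)v = −(2(x₁y₂−x₂y₁)E₄₂)ᵀv. Define S⁰ = {v : κ*(x,y)v = 0 ∀x,y} and Sᵏ = {v ∈ Sᵏ⁻¹ : Φ*(x)v ∈ Sᵏ⁻¹ ∀x}. Then S⁰ = {(v₁,v₂,v₃,0)} and this subspace is invariant under all Φ*(x), so Sᵏ = {(v₁,v₂,v₃,0) : vᵢ ∈ ℝ} for all k ≥ 0. -/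

import Mathlib

open Matrix

noncomputable section

/-- The extension α of the invariant projective structure on the Heisenberg group. -/
def αH (x : Fin 3 → ℝ) : Matrix (Fin 4) (Fin 4) ℝ :=
  !![0, x 0, 0, 0;
     x 0, 0, 0, 0;
     x 1, -(x 1), -(x 0), 0;
     x 2, x 2, -(x 0), x 0]

/-- The curvature κ(x,y) = 2(x₁y₂ − x₂y₁)E₄₂. -/
def κH (x y : Fin 3 → ℝ) : Matrix (Fin 4) (Fin 4) ℝ :=
  (2 * (x 0 * y 1 - x 1 * y 0)) • Matrix.single (3 : Fin 4) (1 : Fin 4) (1 : ℝ)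

/-- The dual action Φ*(x)v = −α(x)ᵀ v. -/
def Φdual (x : Fin 3 → ℝ) (v : Fin 4 → ℝ) : Fin 4 → ℝ := -((αH x)ᵀ.mulVec v)

/-- The dual curvature κ*(x,y)v = −κ(x,y)ᵀ v. -/
def κdual (x y : Fin 3 → ℝ) (v : Fin 4 → ℝ) : Fin 4 → ℝ := -((κH x y)ᵀ.mulVec v)

/-- The sets S⁰ ⊇ S¹ ⊇ S² ⊇ ⋯ for the dual tractor connection. -/
def S15 : ℕ → Set (Fin 4 → ℝ)
  | 0 => {v | ∀ x y : Fin 3 → ℝ, κdual x y v = 0}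
  | (k + 1) => {v | v ∈ S15 k ∧ ∀ x : Fin 3 → ℝ, Φdual x v ∈ S15 k}

/-!
The transposed curvature `κ(x,y)ᵀ` is a multiple of `E₂₄`, so `κ*(x,y)v` only sees `v₄`, and it
sees it as soon as `x₁y₂ − x₂y₁ ≠ 0`; hence `S⁰ = {v₄ = 0}`. The fourth column of `α(x)` is
`(0,0,0,x₁)`, so `(Φ*(x)v)₄ = −x₁v₄` and `S⁰` is `Φ*`-invariant. An invariant `S⁰` makes the
recursion defining `Sᵏ` stationary.
-/

lemma κdual_apply (x y : Fin 3 → ℝ) (v : Fin 4 → ℝ) (i : Fin 4) :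
    κdual x y v i = if i = 1 then -(2 * (x 0 * y 1 - x 1 * y 0) * v 3) else 0 := by
  fin_cases i <;>
    simp [κdual, κH, Matrix.mulVec, dotProduct, Matrix.single]

lemma Φdual_apply_three (x : Fin 3 → ℝ) (v : Fin 4 → ℝ) : Φdual x v 3 = -(x 0 * v 3) := by
  simp [Φdual, αH, Matrix.mulVec, dotProduct, Fin.sum_univ_four]

lemma S15_zero : S15 0 = {v | v 3 = 0} := by
  ext v
  refine ⟨fun h => ?_, fun (hv : v 3 = 0) x y => funext fun i => by simp [κdual_apply, hv]⟩
  simpa [κdual_apply] using congrFun (h ![1, 0, 0] ![0, 1, 0]) 1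

lemma Φdual_mem_S15_zero {v : Fin 4 → ℝ} (hv : v ∈ S15 0) (x : Fin 3 → ℝ) :
    Φdual x v ∈ S15 0 := by
  rw [S15_zero] at hv ⊢
  simp [Φdual_apply_three, hv.out]

lemma S15_eq_S15_zero (hinv : ∀ v ∈ S15 0, ∀ x, Φdual x v ∈ S15 0) (k : ℕ) :
    S15 k = S15 0 := by
  induction k with
  | zero => rfl
  | succ k ih =>
    ext v
    simp only [S15, Set.mem_ofPred_eq, ih]
    exact ⟨And.left, fun hv => ⟨hv, hinv v hv⟩⟩

theorem stmt15 :
    S15 0 = {v | v 3 = 0} ∧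
    (∀ v ∈ S15 0, ∀ x : Fin 3 → ℝ, Φdual x v ∈ S15 0) ∧
    (∀ k : ℕ, S15 k = {v | v 3 = 0}) :=
  ⟨S15_zero, fun _ hv => Φdual_mem_S15_zero hv,
    fun k => (S15_eq_S15_zero (fun _ hv => Φdual_mem_S15_zero hv) k).trans S15_zero⟩
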